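/- If S and S' are two partial rainbows on a finite group G generating the same transfer system, then S and S' coincide up to conjugation: for each (K,H) ∈ S there exists g ∈ G with (K^g,H^g) ∈ S'. -/
import Mathlib


/-- Conjugate of a subgroup: `H^g`. -/
def conjSub {G : Type*} [Group G] (g : G) (H : Subgroup G) : Subgroup G :=
  H.map (MulAut.conj g).toMonoidHom

/-- A `G`-transfer system: a set of pairs `(K, H)` of subgroups with `K ≤ H`, containing all
identity pairs and closed under composition, conjugation, and restriction. -/
def IsTransferSystem {G : Type*} [Group G] (T : Set (Subgroup G × Subgroup G)) : Prop :=
  (∀ p ∈ T, p.1 ≤ p.2) ∧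
  (∀ H : Subgroup G, (H, H) ∈ T) ∧
  (∀ L K H : Subgroup G, (L, K) ∈ T → (K, H) ∈ T → (L, H) ∈ T) ∧
  (∀ K H : Subgroup G, (K, H) ∈ T → ∀ g : G, (conjSub g K, conjSub g H) ∈ T) ∧
  (∀ K H : Subgroup G, (K, H) ∈ T → ∀ L : Subgroup G, L ≤ H → (K ⊓ L, L) ∈ T)

/-- Rubin's closure: the smallest transfer system containing `S`. -/
def tsGen {G : Type*} [Group G] (S : Set (Subgroup G × Subgroup G)) :
    Set (Subgroup G × Subgroup G) :=
  ⋂₀ {T | IsTransferSystem T ∧ S ⊆ T}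

/-- `S` is a minimal generating set (of non-identity intervals) for the transfer system `T`. -/
def IsMinGenSet {G : Type*} [Group G] (S T : Set (Subgroup G × Subgroup G)) : Prop :=
  S ⊆ T ∧ (∀ p ∈ S, p.1 ≠ p.2) ∧ tsGen S = T ∧ ∀ s ∈ S, tsGen (S \ {s}) ⊂ T

/-- Total exponent (number of prime factors with multiplicity) of `n`. -/
def bigOmega (n : ℕ) : ℕ := n.primeFactorsList.length

/-- The image of an interval of subgroups under the total-exponent map `P`. -/
noncomputable def pairP {G : Type*} [Group G] (p : Subgroup G × Subgroup G) : ℕ × ℕ :=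
  (bigOmega (Nat.card (↥p.1)), bigOmega (Nat.card (↥p.2)))

/-- A partial rainbow on `G`: a set of non-identity intervals of subgroups whose image under
`P` is a set of strictly nested arcs, containing at most one pair from each conjugacy class
of pairs of subgroups. -/
def IsPartialRainbow {G : Type*} [Group G] (S : Set (Subgroup G × Subgroup G)) : Prop :=
  (∀ p ∈ S, p.1 < p.2) ∧
  (∀ p ∈ S, ∀ q ∈ S, pairP p ≠ pairP q →
      ((pairP p).1 < (pairP q).1 ∧ (pairP q).2 < (pairP p).2) ∨
      ((pairP q).1 < (pairP p).1 ∧ (pairP p).2 < (pairP q).2)) ∧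
  (∀ p ∈ S, ∀ q ∈ S, (∃ g : G, conjSub g p.1 = q.1 ∧ conjSub g p.2 = q.2) → p = q)

lemma conjSub_one {G : Type*} [Group G] (H : Subgroup G) : conjSub 1 H = H := by
  ext x; simp [conjSub]

lemma conjSub_conjSub {G : Type*} [Group G] (g g' : G) (H : Subgroup G) :
    conjSub g (conjSub g' H) = conjSub (g * g') H := by
  ext x; simp only [conjSub, Subgroup.map_map]
  constructor <;> · rintro ⟨y, hy, rfl⟩; exact ⟨y, hy, by simp [mul_assoc]⟩

lemma conjSub_mono {G : Type*} [Group G] (g : G) {H K : Subgroup G} (h : H ≤ K) :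
    conjSub g H ≤ conjSub g K := Subgroup.map_mono h

lemma card_conjSub {G : Type*} [Group G] (g : G) (H : Subgroup G) :
    Nat.card (conjSub g H) = Nat.card H :=
  (Nat.card_congr (H.equivMapOfInjective _ (MulAut.conj g).injective).toEquiv).symm

lemma bigOmega_le_of_dvd {a b : ℕ} (h : a ∣ b) (hb : b ≠ 0) : bigOmega a ≤ bigOmega b :=
  (Nat.primeFactorsList_sublist_of_dvd h hb).length_le

lemma eq_of_dvd_of_bigOmega_le {a b : ℕ} (h : a ∣ b) (hb : b ≠ 0)
    (hΩ : bigOmega b ≤ bigOmega a) : a = b := by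
  have hs := Nat.primeFactorsList_sublist_of_dvd h hb
  have := hs.eq_of_length_le hΩ
  have ha : a ≠ 0 := by rintro rfl; exact hb ((Nat.zero_dvd).mp h)
  calc a = a.primeFactorsList.prod := (Nat.prod_primeFactorsList ha).symm
    _ = b.primeFactorsList.prod := by rw [this]
    _ = b := Nat.prod_primeFactorsList hb

lemma subgroup_eq_of_le_of_card_le {G : Type*} [Group G] [Finite G] {H K : Subgroup G}
    (h : H ≤ K) (hc : Nat.card K ≤ Nat.card H) : H = K := by
  have := Set.eq_of_subset_of_ncard_le (show (H : Set G) ⊆ K from h)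
    (by rwa [← Nat.card_coe_set_eq, ← Nat.card_coe_set_eq]) (Set.toFinite _)
  exact SetLike.coe_injective this

/-- The key extraction: every pair in the transfer system generated by `S₀` is either an
identity pair or lies (coordinatewise) under a conjugate of a generator. -/
lemma tsGen_subset_Q {G : Type*} [Group G] (S₀ : Set (Subgroup G × Subgroup G))
    (hS₀ : ∀ q ∈ S₀, q.1 ≤ q.2) :
    tsGen S₀ ⊆ {p | p.1 ≤ p.2 ∧ (p.1 = p.2 ∨
      ∃ q ∈ S₀, ∃ g : G, p.2 ≤ conjSub g q.2 ∧ p.1 ≤ conjSub g q.1)} := by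
  intro p hp
  apply hp
  constructor
  · refine ⟨fun p hp => hp.1, fun H => ⟨le_rfl, Or.inl rfl⟩, ?_, ?_, ?_⟩
    · rintro L K H ⟨hLK, hL⟩ ⟨hKH, hK⟩
      refine ⟨hLK.trans hKH, ?_⟩
      rcases hK with heq | ⟨q, hq, g, h2, h1⟩
      · obtain rfl : K = H := heq
        rcases hL with heq | ⟨q, hq, g, h2, h1⟩
        · exact Or.inl heq
        · exact Or.inr ⟨q, hq, g, h2, h1⟩
      · exact Or.inr ⟨q, hq, g, h2, hLK.trans h1⟩
    · rintro K H ⟨hKH, hK⟩ g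
      refine ⟨conjSub_mono g hKH, ?_⟩
      rcases hK with heq | ⟨q, hq, g', h2, h1⟩
      · obtain rfl : K = H := heq
        exact Or.inl rfl
      · exact Or.inr ⟨q, hq, g * g', by
          rw [← conjSub_conjSub]; exact conjSub_mono g h2, by
          rw [← conjSub_conjSub]; exact conjSub_mono g h1⟩
    · rintro K H ⟨hKH, hK⟩ L hLH
      refine ⟨inf_le_right, ?_⟩
      rcases hK with heq | ⟨q, hq, g, h2, h1⟩
      · obtain rfl : K = H := heq
        exact Or.inl (by dsimp only; rw [inf_eq_right.mpr hLH])
      · exact Or.inr ⟨q, hq, g, hLH.trans h2, inf_le_left.trans h1⟩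
  · intro q hq
    exact ⟨hS₀ q hq, Or.inr ⟨q, hq, 1, by rw [conjSub_one], by rw [conjSub_one]⟩⟩

lemma subset_tsGen {G : Type*} [Group G] (S : Set (Subgroup G × Subgroup G)) : S ⊆ tsGen S :=
  fun p hp T hT => hT.2 hp

/-- Two partial rainbows generating the same transfer system coincide up to conjugation. -/
theorem partialRainbows_coincide_up_to_conj {G : Type*} [Group G] [Finite G]
    (S S' : Set (Subgroup G × Subgroup G)) (hS : IsPartialRainbow S)
    (hS' : IsPartialRainbow S') (h : tsGen S = tsGen S') :
    ∀ p ∈ S, ∃ g : G, (conjSub g p.1, conjSub g p.2) ∈ S' := by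
  obtain ⟨hSlt, hSarc, -⟩ := hS
  obtain ⟨hS'lt, -, -⟩ := hS'
  intro p hp
  have hp1 : p ∈ tsGen S' := h ▸ subset_tsGen S hp
  obtain ⟨hle, heq | ⟨q, hqS', g, h2, h1⟩⟩ :=
    tsGen_subset_Q S' (fun q hq => (hS'lt q hq).le) hp1
  · exact absurd heq (hSlt p hp).ne
  have hq1 : q ∈ tsGen S := h ▸ subset_tsGen S' hqS'
  obtain ⟨hqle, heq | ⟨r, hrS, g', h2', h1'⟩⟩ :=
    tsGen_subset_Q S (fun r hr => (hSlt r hr).le) hq1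
  · exact absurd heq (hS'lt q hqS').ne
  -- cardinalities are nonzero
  have cpos : ∀ H : Subgroup G, Nat.card H ≠ 0 := fun H => Nat.card_pos.ne'
  -- Ω inequalities
  have d1 : Nat.card p.1 ∣ Nat.card q.1 := by
    rw [← card_conjSub g q.1]; exact Subgroup.card_dvd_of_le h1
  have d2 : Nat.card p.2 ∣ Nat.card q.2 := by
    rw [← card_conjSub g q.2]; exact Subgroup.card_dvd_of_le h2
  have d1' : Nat.card q.1 ∣ Nat.card r.1 := by
    rw [← card_conjSub g' r.1]; exact Subgroup.card_dvd_of_le h1'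
  have d2' : Nat.card q.2 ∣ Nat.card r.2 := by
    rw [← card_conjSub g' r.2]; exact Subgroup.card_dvd_of_le h2'
  have o1 : bigOmega (Nat.card p.1) ≤ bigOmega (Nat.card q.1) :=
    bigOmega_le_of_dvd d1 (cpos _)
  have o2 : bigOmega (Nat.card p.2) ≤ bigOmega (Nat.card q.2) :=
    bigOmega_le_of_dvd d2 (cpos _)
  have o1' : bigOmega (Nat.card q.1) ≤ bigOmega (Nat.card r.1) :=
    bigOmega_le_of_dvd d1' (cpos _)
  have o2' : bigOmega (Nat.card q.2) ≤ bigOmega (Nat.card r.2) :=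
    bigOmega_le_of_dvd d2' (cpos _)
  -- arcs of p and r coincide
  have harc : pairP p = pairP r := by
    by_contra hne
    rcases hSarc p hp r hrS hne with ⟨-, hlt⟩ | ⟨hlt, -⟩
    · exact absurd (o2.trans o2') (not_le_of_gt hlt)
    · exact absurd (o1.trans o1') (not_le_of_gt hlt)
  have e1 : bigOmega (Nat.card r.1) = bigOmega (Nat.card p.1) :=
    congrArg Prod.fst harc.symm
  have e2 : bigOmega (Nat.card r.2) = bigOmega (Nat.card p.2) :=
    congrArg Prod.snd harc.symm
  -- hence cardinalities agree, and the inclusions are equalities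
  have c1 : Nat.card p.1 = Nat.card q.1 :=
    eq_of_dvd_of_bigOmega_le d1 (cpos _) (o1'.trans e1.le)
  have c2 : Nat.card p.2 = Nat.card q.2 :=
    eq_of_dvd_of_bigOmega_le d2 (cpos _) (o2'.trans e2.le)
  have hK : p.1 = conjSub g q.1 :=
    subgroup_eq_of_le_of_card_le h1 (by rw [card_conjSub, ← c1])
  have hH : p.2 = conjSub g q.2 :=
    subgroup_eq_of_le_of_card_le h2 (by rw [card_conjSub, ← c2])
  refine ⟨g⁻¹, ?_⟩
  rw [hK, hH, conjSub_conjSub, conjSub_conjSub, inv_mul_cancel, conjSub_one, conjSub_one]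
  simpa using hqS'
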